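/- arXiv:1912.04310 — 2 statements merged into one kernel-verified Lean document; each statement's English description precedes it below -/
import Mathlib

section
/- Fix K, r ∈ [1,∞) and, for each i ∈ ℕ, let f_i : ℝ → ℝ be K-Lipschitz continuous with |f_i(0)| ≤ K. Define g_d : ℝ^d → ℝ by g_d(x) = Σ_{i=1}^d f_i(x_i). Then for every d ∈ ℕ and ε ∈ (0,1] there exists a skeleton φ with ReLU-realization R_ReLU(φ) : ℝ^d → ℝ such that: 1) sup_{x∈[−r,r]^d} |g_d(x) − R_ReLU(φ)(x)| ≤ ε; 2) R_ReLU(φ) is √d·K-Lipschitz on ℝ^d; 3) P(φ) ≤ (4/7)·10³·K²·r·d⁵·ε^{−1}. -/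
open scoped BigOperators ENNReal

noncomputable section

/-- The rectified linear unit activation function. -/
def ReLU (x : ℝ) : ℝ := max x 0

/-- Truncation of a real sequence to its first `n` entries. -/
def trunc (n : ℕ) (x : ℕ → ℝ) : ℕ → ℝ := fun j => if j < n then x j else 0

/-- Embedding of a Euclidean vector into the space of real sequences. -/
def emb (n : ℕ) (x : EuclideanSpace ℝ (Fin n)) : ℕ → ℝ :=
  fun j => if h : j < n then x ⟨j, h⟩ else 0

/-- A neural network skeleton of depth `Dm + 1`.  The layer dimensions are
`l 0, …, l (Dm + 1)`; the weight matrix of layer `k + 1` is `V k` (a matrix of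
size `l (k+1) × l k`, stored as a doubly indexed sequence) and its bias is `b k`.
Entries beyond the relevant ranges are irrelevant junk. -/
structure NN where
  Dm : ℕ
  l : ℕ → ℕ
  V : ℕ → ℕ → ℕ → ℝ
  b : ℕ → ℕ → ℝ

namespace NN

/-- Depth `D(φ)` of a skeleton. -/
def depth (φ : NN) : ℕ := φ.Dm + 1

/-- Number of parameters `P(φ) = ∑_{k=1}^{D} l_k (l_{k-1} + 1)`. -/
def P (φ : NN) : ℕ := ∑ k ∈ Finset.range φ.depth, φ.l (k + 1) * (φ.l k + 1)

/-- The affine map `A_{k+1}(x) = V_{k+1} x + b_{k+1}` of a skeleton. -/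
def aff (φ : NN) (k : ℕ) (x : ℕ → ℝ) : ℕ → ℝ :=
  fun i => (∑ j ∈ Finset.range (φ.l k), φ.V k i j * x j) + φ.b k i

/-- State after `k` layers, with the activation applied after each affine map. -/
def hidden (a : ℝ → ℝ) (φ : NN) : ℕ → (ℕ → ℝ) → ℕ → ℝ
  | 0 => fun x => x
  | k + 1 => fun x i => a (φ.aff k (φ.hidden a k x) i)

/-- The `a`-realization `R_a(φ) = A_D ∘ a ∘ A_{D-1} ∘ ⋯ ∘ a ∘ A_1`, acting on
sequences (only the first `l 0` input coordinates and the first `l D` output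
coordinates are meaningful). -/
def fullReal (a : ℝ → ℝ) (φ : NN) (x : ℕ → ℝ) : ℕ → ℝ :=
  φ.aff φ.Dm (φ.hidden a φ.Dm (trunc (φ.l 0) x))

/-- The `a`-realization as a map `ℝ^m → ℝ^n` (meaningful when `l 0 = m` and
`l D = n`). -/
def realAs (a : ℝ → ℝ) (φ : NN) (m n : ℕ) (x : EuclideanSpace ℝ (Fin m)) :
    EuclideanSpace ℝ (Fin n) :=
  WithLp.toLp 2 fun i => φ.fullReal a (emb m x) i

/-- The `a`-realization as a scalar-valued map `ℝ^m → ℝ`. -/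
def realScalar (a : ℝ → ℝ) (φ : NN) (m : ℕ) (x : EuclideanSpace ℝ (Fin m)) : ℝ :=
  φ.fullReal a (emb m x) 0

/-- The `a`-realization as a map `ℝ → ℝ`. -/
def real1 (a : ℝ → ℝ) (φ : NN) (x : ℝ) : ℝ :=
  φ.fullReal a (fun j => if j = 0 then x else 0) 0

/-- Concatenation `ψ ∘ φ` of two skeletons (meaningful when
`l_{D(φ)}(φ) = l_0(ψ)`). -/
def comp (ψ φ : NN) : NN where
  Dm := φ.Dm + ψ.Dm
  l := fun k => if k < φ.depth then φ.l k else ψ.l (k + 1 - φ.depth)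
  V := fun k =>
    if k < φ.Dm then φ.V k
    else if k = φ.Dm then fun i j => ∑ m ∈ Finset.range (ψ.l 0), ψ.V 0 i m * φ.V φ.Dm m j
    else ψ.V (k - φ.Dm)
  b := fun k =>
    if k < φ.Dm then φ.b k
    else if k = φ.Dm then
      fun i => (∑ m ∈ Finset.range (ψ.l 0), ψ.V 0 i m * φ.b φ.Dm m) + ψ.b 0 i
    else ψ.b (k - φ.Dm)

/-- Offset of the `q`-th block in layer `k` of a parallelization. -/
def poff (ν : ℕ → NN) (k q : ℕ) : ℕ := ∑ j ∈ Finset.range q, (ν j).l k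

/-- Parallelization `p(φ_1, …, φ_n)` of `n` skeletons (meaningful when they all
have the same depth): block-diagonal weight matrices and concatenated biases. -/
def parallel (n : ℕ) (ν : ℕ → NN) : NN where
  Dm := (ν 0).Dm
  l := fun k => ∑ j ∈ Finset.range n, (ν j).l k
  V := fun k i j =>
    ∑ q ∈ Finset.range n,
      if poff ν (k + 1) q ≤ i ∧ i < poff ν (k + 1) q + (ν q).l (k + 1) ∧
          poff ν k q ≤ j ∧ j < poff ν k q + (ν q).l k then
        (ν q).V k (i - poff ν (k + 1) q) (j - poff ν k q)
      else 0
  b := fun k i =>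
    ∑ q ∈ Finset.range n,
      if poff ν (k + 1) q ≤ i ∧ i < poff ν (k + 1) q + (ν q).l (k + 1) then
        (ν q).b k (i - poff ν (k + 1) q)
      else 0

/-- The activation `a` fulfills the `c`-identity requirement, witnessed by the
skeleton `I`: `I` has depth 2, input and output dimension 1, hidden dimension
at most `c`, and its `a`-realization is the identity on `ℝ`. -/
def IdReq (a : ℝ → ℝ) (c : ℝ) (I : NN) : Prop :=
  I.Dm = 1 ∧ I.l 0 = 1 ∧ I.l 2 = 1 ∧ (I.l 1 : ℝ) ≤ c ∧
    ∀ x : ℕ → ℝ, I.fullReal a x 0 = x 0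

/-- The `d`-fold parallelization `I_d` of an identity skeleton. -/
def Idn (I : NN) (d : ℕ) : NN := parallel d fun _ => I

/-- Concatenate `m` identity networks after `φ`. -/
def padAfter (I φ : NN) : ℕ → NN
  | 0 => φ
  | m + 1 => comp (Idn I ((padAfter I φ m).l (padAfter I φ m).depth)) (padAfter I φ m)

/-- Concatenate `m` identity networks in front of `φ`. -/
def padBefore (I φ : NN) : ℕ → NN
  | 0 => φ
  | m + 1 => comp (padBefore I φ m) (Idn I ((padBefore I φ m).l 0))

/-- Diagonal ("staggered") parallelization `p_I(φ_1, …, φ_n)` of arbitrary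
skeletons, obtained by padding each `φ_q` with identity networks so that all
have equal depth and then parallelizing. -/
def dpar (I : NN) (n : ℕ) (ν : ℕ → NN) : NN :=
  parallel n fun q =>
    padAfter I (padBefore I (ν q) (∑ j ∈ Finset.range q, (ν j).depth))
      (∑ j ∈ Finset.Ico (q + 1) n, (ν j).depth)

end NN


open Finset in
private lemma relu_diff_nonneg' {s t a : ℝ} (h : s ≤ t) : 0 ≤ max (t - a) 0 - max (s - a) 0 := by
  simp only [max_def]; split_ifs <;> linarith

open Finset in
private lemma relu_diff_le' {s t a : ℝ} (h : s ≤ t) : max (t - a) 0 - max (s - a) 0 ≤ t - s := by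
  simp only [max_def]; split_ifs <;> linarith

open Finset in
private lemma relu_diff_anti' {s t a a' : ℝ} (h : s ≤ t) (ha : a ≤ a') :
    max (t - a') 0 - max (s - a') 0 ≤ max (t - a) 0 - max (s - a) 0 := by
  simp only [max_def]; split_ifs <;> linarith

open Finset in
private lemma abel_sum' (sl g : ℕ → ℝ) (n : ℕ) :
    ∑ j ∈ range n, (sl (j + 1) - sl j) * g j
      = ∑ j ∈ range n, sl (j + 1) * (g j - g (j + 1)) + sl n * g n - sl 0 * g 0 := by
  induction n with
  | zero => simp
  | succ n ih => rw [Finset.sum_range_succ, Finset.sum_range_succ, ih]; ring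

/-- grid points -/
def tgrid (r δ : ℝ) (j : ℕ) : ℝ := -r + j * δ

/-- slopes, with `slp 0 = 0` -/
def slp (f : ℝ → ℝ) (r δ : ℝ) : ℕ → ℝ
  | 0 => 0
  | j + 1 => (f (tgrid r δ (j + 1)) - f (tgrid r δ j)) / δ

/-- ReLU coefficients -/
def coefc (f : ℝ → ℝ) (r δ : ℝ) (j : ℕ) : ℝ :=
  slp f r δ (j + 1) - slp f r δ j

open Finset in
/-- one-dimensional piecewise linear approximant -/
def happrox (f : ℝ → ℝ) (r δ : ℝ) (N : ℕ) (u : ℝ) : ℝ :=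
  f (-r) + ∑ j ∈ range N, coefc f r δ j * max (u - tgrid r δ j) 0

lemma tgrid_sub (r δ : ℝ) (p q : ℕ) : tgrid r δ p - tgrid r δ q = ((p : ℝ) - q) * δ := by
  simp only [tgrid]; ring

open Finset in
lemma happrox_abel (f : ℝ → ℝ) (r δ : ℝ) (N : ℕ) (u : ℝ) :
    happrox f r δ N u = f (-r)
      + ∑ j ∈ range N, slp f r δ (j + 1) * (max (u - tgrid r δ j) 0 - max (u - tgrid r δ (j + 1)) 0)
      + slp f r δ N * max (u - tgrid r δ N) 0 := by
  unfold happrox coefc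
  rw [abel_sum' (slp f r δ) (fun j => max (u - tgrid r δ j) 0) N]
  simp [slp]; ring

lemma slp_bound {f : ℝ → ℝ} {K r δ : ℝ} (hδ : 0 < δ) (hK : 0 ≤ K)
    (hLip : ∀ x y : ℝ, |f x - f y| ≤ K * |x - y|) (j : ℕ) : |slp f r δ j| ≤ K := by
  cases j with
  | zero => simpa [slp] using hK
  | succ j =>
    have h := hLip (tgrid r δ (j + 1)) (tgrid r δ j)
    rw [show tgrid r δ (j + 1) - tgrid r δ j = δ by rw [tgrid_sub]; push_cast; ring] at h
    rw [slp, abs_div, abs_of_pos hδ, div_le_iff₀ hδ]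
    calc |f (tgrid r δ (j + 1)) - f (tgrid r δ j)| ≤ K * |δ| := h
      _ = K * δ := by rw [abs_of_pos hδ]

open Finset in
private lemma happrox_lip_aux {f : ℝ → ℝ} {K r δ : ℝ} (hδ : 0 < δ) (hK : 0 ≤ K)
    (hLip : ∀ x y : ℝ, |f x - f y| ≤ K * |x - y|) (N : ℕ) {s t : ℝ} (hst : s ≤ t) :
    |happrox f r δ N t - happrox f r δ N s| ≤ K * (t - s) := by
  rw [happrox_abel, happrox_abel]
  set g : ℕ → ℝ → ℝ := fun j u => max (u - tgrid r δ j) 0 with hg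
  have key : (f (-r) + ∑ j ∈ range N, slp f r δ (j+1) * (g j t - g (j+1) t) + slp f r δ N * g N t)
      - (f (-r) + ∑ j ∈ range N, slp f r δ (j+1) * (g j s - g (j+1) s) + slp f r δ N * g N s)
      = (∑ j ∈ range N, slp f r δ (j+1) * ((g j t - g j s) - (g (j+1) t - g (j+1) s)))
        + slp f r δ N * (g N t - g N s) := by
    have h2 : (∑ j ∈ range N, slp f r δ (j+1) * ((g j t - g j s) - (g (j+1) t - g (j+1) s)))
        = ∑ j ∈ range N, (slp f r δ (j+1) * (g j t - g (j+1) t)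
            - slp f r δ (j+1) * (g j s - g (j+1) s)) :=
      Finset.sum_congr rfl fun j _ => by ring
    rw [h2, Finset.sum_sub_distrib]; ring
  rw [key]
  have hmono : ∀ j : ℕ, tgrid r δ j ≤ tgrid r δ (j + 1) := by
    intro j
    have := tgrid_sub r δ (j + 1) j
    push_cast at this; nlinarith
  have hw : ∀ j : ℕ, 0 ≤ (g j t - g j s) - (g (j+1) t - g (j+1) s) := by
    intro j
    have := relu_diff_anti' (a := tgrid r δ j) (a' := tgrid r δ (j+1)) hst (hmono j)
    simp only [hg]; linarith
  calc |(∑ j ∈ range N, slp f r δ (j+1) * ((g j t - g j s) - (g (j+1) t - g (j+1) s)))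
        + slp f r δ N * (g N t - g N s)|
      ≤ (∑ j ∈ range N, |slp f r δ (j+1) * ((g j t - g j s) - (g (j+1) t - g (j+1) s))|)
        + |slp f r δ N * (g N t - g N s)| := by
        exact (abs_add_le _ _).trans (by gcongr; exact Finset.abs_sum_le_sum_abs _ _)
    _ ≤ (∑ j ∈ range N, K * ((g j t - g j s) - (g (j+1) t - g (j+1) s)))
        + K * (g N t - g N s) := by
        gcongr with j hj
        · rw [abs_mul, abs_of_nonneg (hw j)]
          exact mul_le_mul_of_nonneg_right (slp_bound hδ hK hLip _) (hw j)
        · rw [abs_mul, abs_of_nonneg (relu_diff_nonneg' hst)]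
          exact mul_le_mul_of_nonneg_right (slp_bound hδ hK hLip _) (relu_diff_nonneg' hst)
    _ = K * (g 0 t - g 0 s) := by
        rw [← Finset.mul_sum]
        have : (∑ j ∈ range N, ((g j t - g j s) - (g (j+1) t - g (j+1) s)))
            = (g 0 t - g 0 s) - (g N t - g N s) :=
          Finset.sum_range_sub' (fun j => g j t - g j s) N
        rw [this]; ring
    _ ≤ K * (t - s) := mul_le_mul_of_nonneg_left (relu_diff_le' hst) hK

lemma happrox_lip {f : ℝ → ℝ} {K r δ : ℝ} (hδ : 0 < δ) (hK : 0 ≤ K)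
    (hLip : ∀ x y : ℝ, |f x - f y| ≤ K * |x - y|) (N : ℕ) (s t : ℝ) :
    |happrox f r δ N t - happrox f r δ N s| ≤ K * |t - s| := by
  rcases le_total s t with h | h
  · rw [abs_of_nonneg (by linarith : (0:ℝ) ≤ t - s)]
    exact happrox_lip_aux hδ hK hLip N h
  · rw [abs_sub_comm, abs_of_nonpos (by linarith : t - s ≤ 0)]
    have := happrox_lip_aux (r := r) hδ hK hLip N h
    linarith [this, abs_sub_comm (happrox f r δ N s) (happrox f r δ N t)]

open Finset in
lemma happrox_grid {f : ℝ → ℝ} {r δ : ℝ} (hδ : 0 < δ) {N m : ℕ} (hm : m ≤ N) :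
    happrox f r δ N (tgrid r δ m) = f (tgrid r δ m) := by
  rw [happrox_abel]
  have hmN : (m : ℝ) ≤ N := Nat.cast_le.mpr hm
  have hzero : max (tgrid r δ m - tgrid r δ N) 0 = 0 := by
    apply max_eq_right; rw [tgrid_sub]; nlinarith
  have hterm : ∀ j ∈ range N,
      slp f r δ (j + 1) * (max (tgrid r δ m - tgrid r δ j) 0
        - max (tgrid r δ m - tgrid r δ (j + 1)) 0)
      = if j < m then slp f r δ (j + 1) * δ else 0 := by
    intro j _
    by_cases hj : j < m
    · have h1 : (j : ℝ) + 1 ≤ m := by exact_mod_cast hj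
      rw [tgrid_sub, tgrid_sub, max_eq_left (by push_cast; nlinarith),
        max_eq_left (by push_cast; nlinarith), if_pos hj]
      push_cast; ring
    · have h1 : (m : ℝ) ≤ j := by exact_mod_cast Nat.le_of_not_lt hj
      rw [tgrid_sub, tgrid_sub, max_eq_right (by push_cast; nlinarith),
        max_eq_right (by push_cast; nlinarith), if_neg hj]
      ring
  rw [Finset.sum_congr rfl hterm, hzero, mul_zero, add_zero, ← Finset.sum_filter]
  have hfil : (range N).filter (· < m) = range m := by
    ext j; simp only [Finset.mem_filter, Finset.mem_range]; omega
  rw [hfil]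
  have hsum : ∑ j ∈ range m, slp f r δ (j + 1) * δ
      = ∑ j ∈ range m, (f (tgrid r δ (j + 1)) - f (tgrid r δ j)) := by
    apply Finset.sum_congr rfl; intro j _
    rw [slp, div_mul_cancel₀ _ hδ.ne']
  rw [hsum, Finset.sum_range_sub (fun j => f (tgrid r δ j))]
  have : tgrid r δ 0 = -r := by simp [tgrid]
  rw [this]; ring

lemma happrox_close {f : ℝ → ℝ} {K r δ : ℝ} (hδ : 0 < δ) (hK : 0 ≤ K)
    (hLip : ∀ x y : ℝ, |f x - f y| ≤ K * |x - y|) {N : ℕ} (hN : (N : ℝ) * δ = 2 * r)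
    {t : ℝ} (ht : |t| ≤ r) : |f t - happrox f r δ N t| ≤ 2 * K * δ := by
  rw [abs_le] at ht
  have hr0 : 0 ≤ t + r := by linarith
  set m := ⌊(t + r) / δ⌋₊ with hmdef
  have hfl : (m : ℝ) ≤ (t + r) / δ := Nat.floor_le (by positivity)
  have hfl2 : (t + r) / δ < m + 1 := Nat.lt_floor_add_one _
  have hmN : m ≤ N := by
    have h1 : (t + r) / δ ≤ N := by rw [div_le_iff₀ hδ]; nlinarith
    exact_mod_cast hfl.trans h1
  have h1 : (m : ℝ) * δ ≤ t + r := (le_div_iff₀ hδ).mp hfl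
  have h2 : t + r < ((m : ℝ) + 1) * δ := by
    have := (div_lt_iff₀ hδ).mp hfl2; linarith [this]
  have htm : |t - tgrid r δ m| ≤ δ := by
    rw [abs_le]; simp only [tgrid]; constructor <;> nlinarith
  calc |f t - happrox f r δ N t|
      ≤ |f t - f (tgrid r δ m)| + |f (tgrid r δ m) - happrox f r δ N t| := abs_sub_le _ _ _
    _ ≤ K * |t - tgrid r δ m| + K * |tgrid r δ m - t| := by
        gcongr
        · exact hLip _ _
        · rw [show f (tgrid r δ m) = happrox f r δ N (tgrid r δ m) from
              (happrox_grid hδ hmN).symm]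
          exact happrox_lip hδ hK hLip N t (tgrid r δ m)
    _ ≤ 2 * K * δ := by
        rw [abs_sub_comm (tgrid r δ m) t]
        nlinarith [abs_nonneg (t - tgrid r δ m)]

open Finset in
/-- The approximating network. -/
def netphi (f : ℕ → ℝ → ℝ) (r δ : ℝ) (d N : ℕ) : NN where
  Dm := 1
  l := fun k => if k = 0 then d else if k = 1 then d * N else 1
  V := fun k => if k = 0 then (fun i j => if j = i / N then 1 else 0)
    else fun _ j => coefc (f (j / N)) r δ (j % N)
  b := fun k i => if k = 0 then -(tgrid r δ (i % N)) else ∑ q ∈ Finset.range d, f q (-r)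

lemma netphi_l0 (f : ℕ → ℝ → ℝ) (r δ : ℝ) (d N : ℕ) : (netphi f r δ d N).l 0 = d := rfl

lemma netphi_ldepth (f : ℕ → ℝ → ℝ) (r δ : ℝ) (d N : ℕ) :
    (netphi f r δ d N).l (netphi f r δ d N).depth = 1 := rfl

lemma netphi_P (f : ℕ → ℝ → ℝ) (r δ : ℝ) (d N : ℕ) :
    (netphi f r δ d N).P = d * N * (d + 1) + (d * N + 1) := by
  simp [NN.P, NN.depth, netphi, Finset.sum_range_succ]

open Finset in
/-- split a sum over `range (d*N)` into a double sum via div/mod -/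
lemma sum_range_mul_divmod (F : ℕ → ℕ → ℝ) (d N : ℕ) :
    ∑ i ∈ range (d * N), F (i / N) (i % N) = ∑ q ∈ range d, ∑ j ∈ range N, F q j := by
  rcases Nat.eq_zero_or_pos N with hN | hN
  · simp [hN]
  induction d with
  | zero => simp
  | succ d ih =>
    rw [Finset.sum_range_succ, ← ih, Nat.succ_mul, Finset.sum_range_add]
    congr 1
    apply Finset.sum_congr rfl
    intro j hj
    rw [Finset.mem_range] at hj
    have h1 : (d * N + j) / N = d := by
      rw [Nat.mul_comm, Nat.mul_add_div hN, Nat.div_eq_of_lt hj]; omega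
    have h2 : (d * N + j) % N = j := by
      rw [Nat.mul_comm, Nat.mul_add_mod, Nat.mod_eq_of_lt hj]
    rw [h1, h2]

open Finset in
lemma net_eval (f : ℕ → ℝ → ℝ) (r δ : ℝ) (d N : ℕ) (hN : 0 < N)
    (x : EuclideanSpace ℝ (Fin d)) :
    (netphi f r δ d N).realScalar ReLU d x
      = ∑ q ∈ range d, happrox (f q) r δ N (emb d x q) := by
  have htr : trunc d (emb d x) = emb d x := by
    funext j; by_cases h : j < d <;> simp [trunc, emb, h]
  have haff0 : ∀ i, i < d * N →
      (netphi f r δ d N).aff 0 (emb d x) i = emb d x (i / N) - tgrid r δ (i % N) := by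
    intro i hi
    have hdiv : i / N < d := (Nat.div_lt_iff_lt_mul hN).mpr hi
    simp only [NN.aff, netphi, if_pos rfl, eq_self_iff_true, if_true, ite_mul, one_mul, zero_mul]
    rw [Finset.sum_ite_eq' (range d) (i / N) (emb d x), if_pos (Finset.mem_range.mpr hdiv)]
    ring
  show (netphi f r δ d N).aff 1 (NN.hidden ReLU (netphi f r δ d N) 1
      (trunc ((netphi f r δ d N).l 0) (emb d x))) 0 = _
  rw [netphi_l0, htr]
  have hl1 : (netphi f r δ d N).l 1 = d * N := rfl
  show (∑ j ∈ range ((netphi f r δ d N).l 1), (netphi f r δ d N).V 1 0 j *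
      NN.hidden ReLU (netphi f r δ d N) 1 (emb d x) j) + (netphi f r δ d N).b 1 0 = _
  rw [hl1]
  have hsummand : ∀ j ∈ range (d * N), (netphi f r δ d N).V 1 0 j *
      NN.hidden ReLU (netphi f r δ d N) 1 (emb d x) j
      = coefc (f (j / N)) r δ (j % N) * max (emb d x (j / N) - tgrid r δ (j % N)) 0 := by
    intro j hj
    rw [Finset.mem_range] at hj
    show coefc (f (j / N)) r δ (j % N) * ReLU ((netphi f r δ d N).aff 0 (emb d x) j) = _
    rw [haff0 j hj]; rfl
  rw [Finset.sum_congr rfl hsummand,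
    sum_range_mul_divmod (fun q j => coefc (f q) r δ j * max (emb d x q - tgrid r δ j) 0) d N]
  have hb : (netphi f r δ d N).b 1 0 = ∑ q ∈ range d, f q (-r) := rfl
  rw [hb, ← Finset.sum_add_distrib]
  apply Finset.sum_congr rfl
  intro q _
  rw [happrox]; ring

set_option maxHeartbeats 1000000 in
/-- Proposition 7.1: sums of one-dimensional Lipschitz functions can be
approximated by ReLU networks without the curse of dimensionality. -/
theorem sum_of_lipschitz_approximation (K r : ℝ) (hK : 1 ≤ K) (hr : 1 ≤ r)
    (f : ℕ → ℝ → ℝ)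
    (hLip : ∀ i : ℕ, ∀ x y : ℝ, |f i x - f i y| ≤ K * |x - y|)
    (h0 : ∀ i : ℕ, |f i 0| ≤ K) :
    ∀ d : ℕ, 0 < d → ∀ ε : ℝ, 0 < ε → ε ≤ 1 →
      ∃ φ : NN, φ.l 0 = d ∧ φ.l φ.depth = 1 ∧
        (∀ x : EuclideanSpace ℝ (Fin d), (∀ i, |x i| ≤ r) →
          |(∑ i : Fin d, f i (x i)) - φ.realScalar ReLU d x| ≤ ε) ∧
        (∀ x y : EuclideanSpace ℝ (Fin d),
          |φ.realScalar ReLU d x - φ.realScalar ReLU d y| ≤ Real.sqrt d * K * ‖x - y‖) ∧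
        ((φ.P : ℝ) ≤ (4 / 7) * 10 ^ 3 * K ^ 2 * r * (d : ℝ) ^ 5 * ε⁻¹) := by
  intro d hd ε hε hε1
  have hK0 : (0:ℝ) ≤ K := by linarith
  have hd1 : (1:ℝ) ≤ d := by exact_mod_cast hd
  have hrpos : (0:ℝ) < r := by linarith
  set N : ℕ := ⌈4 * (d : ℝ) * K * r / ε⌉₊ with hNdef
  have hquot : (0:ℝ) < 4 * (d : ℝ) * K * r / ε := by positivity
  have hNpos : 0 < N := Nat.ceil_pos.mpr hquot
  have hNR : (0:ℝ) < N := by exact_mod_cast hNpos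
  set δ : ℝ := 2 * r / N with hδdef
  have hδ : 0 < δ := by positivity
  have hNδ : (N : ℝ) * δ = 2 * r := by
    rw [hδdef]; field_simp
  have hNge : 4 * (d : ℝ) * K * r / ε ≤ N := Nat.le_ceil _
  have hNle : (N : ℝ) ≤ 4 * (d : ℝ) * K * r / ε + 1 := (Nat.ceil_lt_add_one hquot.le).le
  refine ⟨netphi f r δ d N, netphi_l0 f r δ d N, netphi_ldepth f r δ d N, ?_, ?_, ?_⟩
  · -- approximation
    intro x hx
    rw [net_eval f r δ d N hNpos x]
    have hfs : ∑ i : Fin d, f i (x i) = ∑ q ∈ Finset.range d, f q (emb d x q) := by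
      rw [← Fin.sum_univ_eq_sum_range (fun q => f q (emb d x q)) d]
      apply Finset.sum_congr rfl
      intro i _
      simp [emb, i.isLt]
    rw [hfs, ← Finset.sum_sub_distrib]
    calc |∑ q ∈ Finset.range d, (f q (emb d x q) - happrox (f q) r δ N (emb d x q))|
        ≤ ∑ q ∈ Finset.range d, |f q (emb d x q) - happrox (f q) r δ N (emb d x q)| :=
          Finset.abs_sum_le_sum_abs _ _
      _ ≤ ∑ _q ∈ Finset.range d, 2 * K * δ := by
          apply Finset.sum_le_sum
          intro q hq
          rw [Finset.mem_range] at hq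
          have hxq : |emb d x q| ≤ r := by
            simp only [emb, dif_pos hq]; exact hx _
          exact happrox_close hδ hK0 (hLip q) hNδ hxq
      _ = (d : ℝ) * (2 * K * δ) := by rw [Finset.sum_const, Finset.card_range]; push_cast; ring
      _ ≤ ε := by
          rw [show (d : ℝ) * (2 * K * δ) = 4 * (d : ℝ) * K * r / N by
            rw [hδdef]; field_simp; ring]
          rw [div_le_iff₀ hNR]
          have := (div_le_iff₀ hε).mp hNge
          nlinarith
  · -- Lipschitz
    intro x y
    rw [net_eval f r δ d N hNpos x, net_eval f r δ d N hNpos y, ← Finset.sum_sub_distrib]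
    calc |∑ q ∈ Finset.range d, (happrox (f q) r δ N (emb d x q)
            - happrox (f q) r δ N (emb d y q))|
        ≤ ∑ q ∈ Finset.range d, |happrox (f q) r δ N (emb d x q)
            - happrox (f q) r δ N (emb d y q)| := Finset.abs_sum_le_sum_abs _ _
      _ ≤ ∑ q ∈ Finset.range d, K * |emb d x q - emb d y q| := by
          apply Finset.sum_le_sum
          intro q _
          exact happrox_lip hδ hK0 (hLip q) N _ _
      _ = K * ∑ i : Fin d, |(x - y) i| := by
          rw [← Finset.mul_sum]
          congr 1
          rw [← Fin.sum_univ_eq_sum_range (fun q => |emb d x q - emb d y q|) d]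
          apply Finset.sum_congr rfl
          intro i _
          simp [emb, i.isLt]
      _ ≤ K * (Real.sqrt d * ‖x - y‖) := by
          apply mul_le_mul_of_nonneg_left _ hK0
          have hcs : (∑ i : Fin d, |(x - y) i|) ^ 2
              ≤ (d : ℝ) * ∑ i : Fin d, |(x - y) i| ^ 2 := by
            have := sq_sum_le_card_mul_sum_sq
              (s := (Finset.univ : Finset (Fin d))) (f := fun i => |(x - y) i|)
            simpa using this
          have hnorm : ‖x - y‖ = Real.sqrt (∑ i : Fin d, |(x - y) i| ^ 2) := by
            simp only [EuclideanSpace.norm_eq, Real.norm_eq_abs]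
          rw [hnorm, ← Real.sqrt_mul (by positivity) ]
          have h1 : (∑ i : Fin d, |(x - y) i|)
              = Real.sqrt ((∑ i : Fin d, |(x - y) i|) ^ 2) :=
            (Real.sqrt_sq (by positivity)).symm
          rw [h1]
          exact Real.sqrt_le_sqrt hcs
      _ = Real.sqrt d * K * ‖x - y‖ := by ring
  · -- parameter count
    rw [netphi_P]
    clear_value N δ
    have hKpos : (0:ℝ) < K := by linarith
    have hεi : (1:ℝ) ≤ ε⁻¹ := by
      rw [le_inv_comm₀ one_pos hε]; simpa using hε1
    have hεipos : (0:ℝ) < ε⁻¹ := by positivity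
    have hKr : (1:ℝ) ≤ K * r := by nlinarith
    have hA : (1:ℝ) ≤ K * r * ε⁻¹ := by nlinarith
    have hNle' : (N : ℝ) ≤ 4 * (d : ℝ) * (K * r * ε⁻¹) + 1 := by
      rw [div_eq_mul_inv] at hNle; linarith [hNle]
    have hN5 : (N : ℝ) ≤ 5 * (d : ℝ) * (K * r * ε⁻¹) := by nlinarith
    have hd3 : (1:ℝ) ≤ (d : ℝ) ^ 3 := one_le_pow₀ hd1
    have hd0 : (0:ℝ) ≤ (d : ℝ) := by linarith
    have hAd : (1:ℝ) ≤ K * r * ε⁻¹ * (d : ℝ) ^ 3 := by nlinarith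
    have hd35 : (d : ℝ) ^ 3 ≤ (d : ℝ) ^ 5 := pow_le_pow_right₀ hd1 (by norm_num)
    have hKK : K ≤ K ^ 2 := by nlinarith
    have hpos : (0:ℝ) < K ^ 2 * r * ε⁻¹ * (d : ℝ) ^ 5 := by positivity
    push_cast
    calc (d : ℝ) * N * (d + 1) + ((d : ℝ) * N + 1) = (d : ℝ) * N * ((d : ℝ) + 2) + 1 := by ring
      _ ≤ (d : ℝ) * (5 * (d : ℝ) * (K * r * ε⁻¹)) * ((d : ℝ) + 2) + 1 := by
          have hdd : (0:ℝ) ≤ (d : ℝ) * ((d : ℝ) + 2) := by nlinarith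
          nlinarith [mul_le_mul_of_nonneg_left hN5 hdd]
      _ = 5 * (K * r * ε⁻¹) * ((d : ℝ) ^ 2 * ((d : ℝ) + 2)) + 1 := by ring
      _ ≤ 5 * (K * r * ε⁻¹) * ((d : ℝ) ^ 2 * (3 * (d : ℝ))) + 1 := by
          have hstep : (d : ℝ) ^ 2 * ((d : ℝ) + 2) ≤ (d : ℝ) ^ 2 * (3 * (d : ℝ)) := by
            nlinarith [sq_nonneg (d : ℝ)]
          have h5A : (0:ℝ) ≤ 5 * (K * r * ε⁻¹) := by linarith
          nlinarith [mul_le_mul_of_nonneg_left hstep h5A]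
      _ = 15 * (K * r * ε⁻¹) * (d : ℝ) ^ 3 + 1 := by ring
      _ ≤ 16 * (K * r * ε⁻¹ * (d : ℝ) ^ 3) := by nlinarith
      _ ≤ 16 * (K ^ 2 * r * ε⁻¹ * (d : ℝ) ^ 5) := by
          gcongr
      _ ≤ (4 / 7) * 10 ^ 3 * K ^ 2 * r * (d : ℝ) ^ 5 * ε⁻¹ := by nlinarith [hpos]

end
end

section
/- Fix q ∈ (1,∞), K ∈ [1,∞) and, for each i ∈ ℕ, let f_i : ℝ → ℝ be K-Lipschitz continuous with |f_i(0)| ≤ K. Define g_d : ℝ^d → ℝ by g_d(x) = Σ_{i=1}^d f_i(x_i). Then for every d ∈ ℕ and ε ∈ (0,1] there exists a skeleton φ with ReLU-realization R_ReLU(φ) : ℝ^d → ℝ such that: 1) sup_{x∈ℝ^d} (1+‖x‖^q)^{−1}·|g_d(x) − R_ReLU(φ)(x)| ≤ ε; 2) R_ReLU(φ) is √d·K-Lipschitz on ℝ^d; 3) P(φ) ≤ (2/9)·10³·2^{3t(q+1)}·K^{2t(q+1)}·d^{t(q+1)+4}·ε^{−t}, where t = q/(q−1). -/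
open scoped BigOperators ENNReal

noncomputable section

/-!
Interpolate each `f i` piecewise linearly on a uniform grid of `[-R, R]` with `N` cells and extend
it by constants. The interpolant is `K`-Lipschitz, is `2K · 2R/N`-close to `f i` on `[-R, R]` and
`K (|u| - R)`-close outside. Each cell contributes a ramp, a difference of two ReLUs, so the sum
over the coordinates is a network with one hidden layer of width `2dN`. With
`R ^ (q - 1) = 2Kd/ε` the tail error `dK (‖x‖ - R)` is at most `ε/2 · ‖x‖ ^ q`, and `N ≈ 8dKR/ε`
makes the grid error at most `ε/2`; then `P ≈ 2d²N = O(d² (2Kd/ε) ^ (q/(q-1)))`.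
-/

open Finset

lemma ReLU_sub_ReLU_mem_Icc {u v : ℝ} (h : v ≤ u) : ReLU u - ReLU v ∈ Set.Icc 0 (u - v) := by
  unfold ReLU
  constructor <;> simp only [max_def] <;> split_ifs <;> linarith

def ramp (a b u : ℝ) : ℝ := ReLU (u - a) - ReLU (u - b)

lemma ramp_of_le_left {a b u : ℝ} (hab : a ≤ b) (hu : u ≤ a) : ramp a b u = 0 := by
  simp only [ramp, ReLU]
  rw [max_eq_right, max_eq_right] <;> linarith

lemma ramp_of_right_le {a b u : ℝ} (hab : a ≤ b) (hu : b ≤ u) : ramp a b u = b - a := by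
  simp only [ramp, ReLU]
  rw [max_eq_left, max_eq_left] <;> linarith

lemma ramp_mono {a b : ℝ} (hab : a ≤ b) : Monotone (ramp a b) := by
  intro v u h
  simp only [ramp, ReLU, max_def]
  split_ifs <;> linarith

lemma slope_mul_sub {k : Type*} [Field k] (f : k → k) (a b : k) :
    slope f a b * (b - a) = f b - f a := by
  rw [mul_comm]
  exact sub_smul_slope f a b

section Interpolation

variable {f : ℝ → ℝ} {K : ℝ}

lemma nonneg_of_lipschitz (hf : ∀ a b, |f a - f b| ≤ K * |a - b|) : 0 ≤ K := by
  simpa using (abs_nonneg _).trans (hf 1 0)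

lemma abs_slope_le (hf : ∀ a b, |f a - f b| ≤ K * |a - b|) (a b : ℝ) : |slope f a b| ≤ K := by
  rcases eq_or_ne a b with rfl | hab
  · simpa using nonneg_of_lipschitz hf
  rw [slope_def_field, abs_div, div_le_iff₀ (abs_pos.2 (sub_ne_zero.2 hab.symm))]
  exact hf b a

/-- The continuous piecewise linear interpolant of `f` at the nodes `ξ 0 ≤ ⋯ ≤ ξ N`, constant
outside `[ξ 0, ξ N]`. -/
def interp (f : ℝ → ℝ) (ξ : ℕ → ℝ) (N : ℕ) (u : ℝ) : ℝ :=
  f (ξ 0) + ∑ m ∈ range N, slope f (ξ m) (ξ (m + 1)) * ramp (ξ m) (ξ (m + 1)) u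

variable {ξ : ℕ → ℝ} {N : ℕ}

lemma interp_node (hξ : Monotone ξ) {k : ℕ} (hk : k ≤ N) : interp f ξ N (ξ k) = f (ξ k) := by
  have hlow : ∀ m ∈ range k,
      slope f (ξ m) (ξ (m + 1)) * ramp (ξ m) (ξ (m + 1)) (ξ k) = f (ξ (m + 1)) - f (ξ m) := by
    intro m hm
    rw [ramp_of_right_le (hξ m.le_succ) (hξ (mem_range.1 hm)), slope_mul_sub]
  have hhigh : ∀ m ∈ Ico k N,
      slope f (ξ m) (ξ (m + 1)) * ramp (ξ m) (ξ (m + 1)) (ξ k) = 0 := by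
    intro m hm
    rw [ramp_of_le_left (hξ m.le_succ) (hξ (mem_Ico.1 hm).1), mul_zero]
  rw [interp, ← sum_range_add_sum_Ico _ hk, sum_congr rfl hlow, sum_eq_zero hhigh,
    sum_range_sub (fun m => f (ξ m))]
  ring

lemma interp_of_le_left (hξ : Monotone ξ) {u : ℝ} (hu : u ≤ ξ 0) : interp f ξ N u = f (ξ 0) := by
  rw [interp, sum_eq_zero fun m _ => by
    rw [ramp_of_le_left (hξ m.le_succ) (hu.trans (hξ m.zero_le)), mul_zero], add_zero]

lemma interp_of_right_le (hξ : Monotone ξ) {u : ℝ} (hu : ξ N ≤ u) : interp f ξ N u = f (ξ N) := by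
  rw [← interp_node (f := f) hξ (le_refl N), interp, interp]
  congr 1
  refine sum_congr rfl fun m hm => ?_
  have hmN : ξ (m + 1) ≤ ξ N := hξ (mem_range.1 hm)
  rw [ramp_of_right_le (hξ m.le_succ) (hmN.trans hu), ramp_of_right_le (hξ m.le_succ) hmN]

lemma interp_lipschitz (hξ : Monotone ξ) (hf : ∀ a b, |f a - f b| ≤ K * |a - b|) (u v : ℝ) :
    |interp f ξ N u - interp f ξ N v| ≤ K * |u - v| := by
  wlog hvu : v ≤ u generalizing u v
  · rw [abs_sub_comm, abs_sub_comm u]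
    exact this v u (le_of_not_ge hvu)
  have hK := nonneg_of_lipschitz hf
  have hramp : ∀ m, 0 ≤ ramp (ξ m) (ξ (m + 1)) u - ramp (ξ m) (ξ (m + 1)) v := fun m =>
    sub_nonneg.2 (ramp_mono (hξ m.le_succ) hvu)
  calc |interp f ξ N u - interp f ξ N v|
      = |∑ m ∈ range N, slope f (ξ m) (ξ (m + 1)) *
          (ramp (ξ m) (ξ (m + 1)) u - ramp (ξ m) (ξ (m + 1)) v)| := by
        simp only [interp, mul_sub, sum_sub_distrib, add_sub_add_left_eq_sub]
    _ ≤ ∑ m ∈ range N, K * (ramp (ξ m) (ξ (m + 1)) u - ramp (ξ m) (ξ (m + 1)) v) := by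
        refine (abs_sum_le_sum_abs _ _).trans (sum_le_sum fun m _ => ?_)
        rw [abs_mul, abs_of_nonneg (hramp m)]
        exact mul_le_mul_of_nonneg_right (abs_slope_le hf _ _) (hramp m)
    _ = K * ((ReLU (u - ξ 0) - ReLU (v - ξ 0)) - (ReLU (u - ξ N) - ReLU (v - ξ N))) := by
        rw [← mul_sum, ← sum_range_sub' (fun m => ReLU (u - ξ m) - ReLU (v - ξ m))]
        simp only [ramp]
        congr 1
        exact sum_congr rfl fun m _ => by ring
    _ ≤ K * |u - v| := by
        have hfirst := (ReLU_sub_ReLU_mem_Icc (by linarith : v - ξ 0 ≤ u - ξ 0)).2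
        have hlast := (ReLU_sub_ReLU_mem_Icc (by linarith : v - ξ N ≤ u - ξ N)).1
        rw [abs_of_nonneg (sub_nonneg.2 hvu)]
        exact mul_le_mul_of_nonneg_left (by linarith) hK

variable {δ : ℝ}

lemma exists_node_near {c : ℝ} (hδ : 0 ≤ δ) (hstep : ∀ m, ξ (m + 1) - ξ m ≤ δ)
    (hc : c ∈ Set.Icc (ξ 0) (ξ N)) : ∃ k ≤ N, |c - ξ k| ≤ δ := by
  induction N with
  | zero => exact ⟨0, le_rfl, by rw [le_antisymm hc.2 hc.1, sub_self, abs_zero]; exact hδ⟩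
  | succ n ih =>
    by_cases hcn : c ≤ ξ n
    · obtain ⟨k, hk, hck⟩ := ih ⟨hc.1, hcn⟩
      exact ⟨k, hk.trans n.le_succ, hck⟩
    · refine ⟨n + 1, le_rfl, abs_le.2 ⟨?_, ?_⟩⟩ <;> linarith [hc.2, hstep n]

lemma abs_interp_sub_le_of_mem (hξ : Monotone ξ) (hf : ∀ a b, |f a - f b| ≤ K * |a - b|)
    (hstep : ∀ m, ξ (m + 1) - ξ m ≤ δ) {c : ℝ} (hc : c ∈ Set.Icc (ξ 0) (ξ N)) :
    |interp f ξ N c - f c| ≤ 2 * K * δ := by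
  have hδ : 0 ≤ δ := (sub_nonneg.2 (hξ (Nat.zero_le 1))).trans (hstep 0)
  obtain ⟨k, hk, hck⟩ := exists_node_near hδ hstep hc
  have hK := nonneg_of_lipschitz hf
  calc |interp f ξ N c - f c|
      = |(interp f ξ N c - interp f ξ N (ξ k)) + (f (ξ k) - f c)| := by
        rw [interp_node hξ hk]; congr 1; ring
    _ ≤ K * |c - ξ k| + K * |ξ k - c| :=
        (abs_add_le _ _).trans (add_le_add (interp_lipschitz hξ hf _ _) (hf _ _))
    _ ≤ 2 * K * δ := by
        rw [abs_sub_comm (ξ k)]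
        nlinarith

lemma abs_interp_sub_le (hξ : Monotone ξ) (hf : ∀ a b, |f a - f b| ≤ K * |a - b|)
    (hstep : ∀ m, ξ (m + 1) - ξ m ≤ δ) {R : ℝ} (h0 : ξ 0 = -R) (hN : ξ N = R) (u : ℝ) :
    |interp f ξ N u - f u| ≤ 2 * K * δ + K * max (|u| - R) 0 := by
  have hK := nonneg_of_lipschitz hf
  have hδ : 0 ≤ δ := (sub_nonneg.2 (hξ (Nat.zero_le 1))).trans (hstep 0)
  have hKδ : 0 ≤ 2 * K * δ := by positivity
  rcases le_or_gt u (-R) with hu | hu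
  · have hdist : |-R - u| ≤ max (|u| - R) 0 := by
      rw [abs_of_nonneg (by linarith)]
      exact le_max_of_le_left (by linarith [neg_le_abs u])
    rw [interp_of_le_left hξ (h0 ▸ hu), h0]
    nlinarith [hf (-R) u]
  rcases le_or_gt R u with hu' | hu'
  · have hdist : |R - u| ≤ max (|u| - R) 0 := by
      rw [abs_sub_comm, abs_of_nonneg (by linarith)]
      exact le_max_of_le_left (by linarith [le_abs_self u])
    rw [interp_of_right_le hξ (hN ▸ hu'), hN]
    nlinarith [hf R u]
  · have := abs_interp_sub_le_of_mem hξ hf hstep (c := u) ⟨by linarith, by linarith⟩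
    nlinarith [le_max_right (|u| - R) 0]

end Interpolation

lemma sum_abs_le_sqrt_card_mul_norm {ι : Type*} [Fintype ι] (z : EuclideanSpace ℝ ι) :
    ∑ i, |z i| ≤ √(Fintype.card ι) * ‖z‖ := by
  rw [EuclideanSpace.norm_eq, ← Real.sqrt_mul (Nat.cast_nonneg _),
    ← Real.sqrt_sq (sum_nonneg fun i _ => abs_nonneg (z i))]
  apply Real.sqrt_le_sqrt
  simpa [Real.norm_eq_abs, sq_abs] using
    sum_mul_sq_le_sq_mul_sq univ (fun _ => (1 : ℝ)) (fun i => |z i|)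

lemma mul_max_sub_le_rpow {R r q : ℝ} (hR : 0 < R) (hr : 0 ≤ r) (hq : 1 ≤ q) :
    R ^ (q - 1) * max (r - R) 0 ≤ r ^ q := by
  rcases le_total r R with h | h
  · rw [max_eq_right (by linarith), mul_zero]
    exact Real.rpow_nonneg hr q
  · rw [max_eq_left (by linarith)]
    calc R ^ (q - 1) * (r - R) ≤ r ^ (q - 1) * r :=
          mul_le_mul (Real.rpow_le_rpow hR.le h (by linarith)) (by linarith) (by linarith)
            (Real.rpow_nonneg hr _)
      _ = r ^ q := by
          rw [Real.rpow_sub_one (hR.trans_le h).ne', div_mul_cancel₀ _ (hR.trans_le h).ne']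

lemma sum_range_mul {M : Type*} [AddCommMonoid M] (a b : ℕ) (φ : ℕ → M) :
    ∑ j ∈ range (a * b), φ j = ∑ i ∈ range a, ∑ r ∈ range b, φ (i * b + r) := by
  induction a with
  | zero => simp
  | succ a ih => rw [Nat.succ_mul, sum_range_add, ih, sum_range_succ]

namespace NN

def axisNet (d n : ℕ) (c : ℕ → ℕ) (t w : ℕ → ℝ) (B : ℝ) : NN where
  Dm := 1
  l := fun k => if k = 0 then d else if k = 1 then n else 1
  V := fun k i j => if k = 0 then (if j = c i then 1 else 0) else if i = 0 then w j else 0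
  b := fun k i => if k = 0 then -t i else if i = 0 then B else 0

variable {d n : ℕ} {c : ℕ → ℕ} {t w : ℕ → ℝ} {B : ℝ}

lemma axisNet_fullReal (hc : ∀ j < n, c j < d) (y : ℕ → ℝ) :
    (axisNet d n c t w B).fullReal ReLU y 0 = ∑ j ∈ range n, w j * ReLU (y (c j) - t j) + B := by
  simp only [fullReal, aff, axisNet, one_ne_zero, ↓reduceIte, hidden, ite_mul, one_mul, zero_mul,
    sum_ite_eq', mem_range, add_left_inj]
  refine sum_congr rfl fun j hj => ?_
  have hcj := hc j (mem_range.1 hj)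
  simp [trunc, hcj, sub_eq_add_neg]

lemma axisNet_P : (axisNet d n c t w B).P = n * (d + 1) + (n + 1) := by
  simp [P, depth, axisNet, sum_range_succ]

/-- Hidden neuron `2 (k N + m) + e` computes `ReLU (y k - ξ (m + e))`; the pair `e = 0, 1` realizes
the `m`-th ramp of `interp (f k) ξ N`, and the output bias collects the constants `f k (ξ 0)`. -/
def interpNet (d N : ℕ) (f : ℕ → ℝ → ℝ) (ξ : ℕ → ℝ) : NN :=
  axisNet d (d * N * 2) (fun j => j / 2 / N) (fun j => ξ (j / 2 % N + j % 2))
    (fun j => (-1) ^ (j % 2) * slope (f (j / 2 / N)) (ξ (j / 2 % N)) (ξ (j / 2 % N + 1)))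
    (∑ k ∈ range d, f k (ξ 0))

variable {d N : ℕ} {f : ℕ → ℝ → ℝ} {ξ : ℕ → ℝ}

lemma interpNet_fullReal (y : ℕ → ℝ) :
    (interpNet d N f ξ).fullReal ReLU y 0 = ∑ k ∈ range d, interp (f k) ξ N (y k) := by
  have hc : ∀ j < d * N * 2, j / 2 / N < d := fun j hj =>
    Nat.div_lt_of_lt_mul (Nat.div_lt_of_lt_mul (by linarith [mul_comm d N]))
  rw [interpNet, axisNet_fullReal hc, sum_range_mul, sum_range_mul, ← sum_add_distrib]
  refine sum_congr rfl fun k _ => ?_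
  rw [interp, add_comm]
  congr 1
  refine sum_congr rfl fun m hm => ?_
  have hm : m < N := mem_range.1 hm
  have hdiv : (k * N + m) / N = k := by
    rw [add_comm, Nat.add_mul_div_right _ _ (by omega), Nat.div_eq_of_lt hm, zero_add]
  have hmod : (k * N + m) % N = m := by
    rw [add_comm, Nat.add_mul_mod_self_right, Nat.mod_eq_of_lt hm]
  simp only [sum_range_succ, sum_range_zero, zero_add, add_zero, ramp,
    show (k * N + m) * 2 / 2 = k * N + m by omega, show (k * N + m) * 2 % 2 = 0 by omega,
    show ((k * N + m) * 2 + 1) / 2 = k * N + m by omega,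
    show ((k * N + m) * 2 + 1) % 2 = 1 by omega,
    hdiv, hmod]
  ring

lemma interpNet_realScalar (x : EuclideanSpace ℝ (Fin d)) :
    (interpNet d N f ξ).realScalar ReLU d x = ∑ i : Fin d, interp (f i) ξ N (x i) := by
  rw [realScalar, interpNet_fullReal, ← Fin.sum_univ_eq_sum_range]
  simp [emb]

lemma interpNet_P : (interpNet d N f ξ).P = d * N * 2 * (d + 1) + (d * N * 2 + 1) :=
  axisNet_P

lemma interpNet_P_le {M : ℝ} (hd : 1 ≤ d) (hM : 1 ≤ M)
    (hN : (N : ℝ) ≤ 4 * M + 1) : ((interpNet d N f ξ).P : ℝ) ≤ 31 * d ^ 2 * M := by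
  have hd' : (1 : ℝ) ≤ d := Nat.one_le_cast.2 hd
  rw [interpNet_P]
  push_cast
  nlinarith [mul_le_mul_of_nonneg_left hN (by positivity : (0 : ℝ) ≤ 6 * d ^ 2),
    mul_le_mul_of_nonneg_left hM (by positivity : (0 : ℝ) ≤ 7 * d ^ 2)]

end NN

def grid (R : ℝ) (N : ℕ) (m : ℕ) : ℝ := -R + m * (2 * R / N)

section Grid

variable {R : ℝ} {N : ℕ}

lemma grid_zero : grid R N 0 = -R := by simp [grid]

lemma grid_self (hN : N ≠ 0) : grid R N N = R := by
  simp only [grid]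
  field_simp
  ring

lemma grid_succ_sub (m : ℕ) : grid R N (m + 1) - grid R N m = 2 * R / N := by
  simp only [grid]
  push_cast
  ring

lemma grid_monotone (hR : 0 ≤ R) : Monotone (grid R N) := fun _ _ h => by
  simp only [grid]
  gcongr

end Grid

section Sum

variable {d N : ℕ} {f : ℕ → ℝ → ℝ} {K : ℝ} {ξ : ℕ → ℝ}

lemma abs_sum_sub_sum_interp_le (hξ : Monotone ξ) (hLip : ∀ i a b, |f i a - f i b| ≤ K * |a - b|)
    {δ R : ℝ} (hstep : ∀ m, ξ (m + 1) - ξ m ≤ δ) (h0 : ξ 0 = -R) (hN : ξ N = R)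
    (x : EuclideanSpace ℝ (Fin d)) :
    |∑ i : Fin d, f i (x i) - ∑ i : Fin d, interp (f i) ξ N (x i)|
      ≤ d * (2 * K * δ + K * max (‖x‖ - R) 0) := by
  rw [← sum_sub_distrib]
  refine (abs_sum_le_sum_abs _ _).trans ?_
  calc ∑ i : Fin d, |f i (x i) - interp (f i) ξ N (x i)|
      ≤ ∑ _i : Fin d, (2 * K * δ + K * max (‖x‖ - R) 0) := by
        refine sum_le_sum fun i _ => ?_
        rw [abs_sub_comm]
        refine (abs_interp_sub_le hξ (hLip i) hstep h0 hN _).trans ?_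
        have hxi : |x i| ≤ ‖x‖ := by simpa using PiLp.norm_apply_le x i
        gcongr
        exact nonneg_of_lipschitz (hLip 0)
    _ = d * (2 * K * δ + K * max (‖x‖ - R) 0) := by
        rw [sum_const, card_univ, Fintype.card_fin, nsmul_eq_mul]

lemma abs_sum_interp_sub_sum_interp_le (hξ : Monotone ξ)
    (hLip : ∀ i a b, |f i a - f i b| ≤ K * |a - b|) (x y : EuclideanSpace ℝ (Fin d)) :
    |∑ i : Fin d, interp (f i) ξ N (x i) - ∑ i : Fin d, interp (f i) ξ N (y i)|
      ≤ √d * K * ‖x - y‖ := by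
  rw [← sum_sub_distrib]
  calc |∑ i : Fin d, (interp (f i) ξ N (x i) - interp (f i) ξ N (y i))|
      ≤ ∑ i : Fin d, K * |(x - y) i| :=
        (abs_sum_le_sum_abs _ _).trans (sum_le_sum fun i _ => interp_lipschitz hξ (hLip i) _ _)
    _ ≤ K * (√d * ‖x - y‖) := by
        rw [← mul_sum]
        gcongr
        · exact nonneg_of_lipschitz (hLip 0)
        · simpa using sum_abs_le_sqrt_card_mul_norm (x - y)
    _ = √d * K * ‖x - y‖ := by ring

lemma weighted_abs_sum_sub_sum_interp_grid_le (hLip : ∀ i a b, |f i a - f i b| ≤ K * |a - b|)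
    {q ε R : ℝ} (hq : 1 ≤ q) (hε : 0 < ε) (hR : 0 < R) (hN : 0 < N)
    (hRq : 2 * K * d / ε ≤ R ^ (q - 1)) (hNR : 8 * K * d * R / ε ≤ N)
    (x : EuclideanSpace ℝ (Fin d)) :
    (1 + ‖x‖ ^ q)⁻¹ * |∑ i : Fin d, f i (x i) - ∑ i : Fin d, interp (f i) (grid R N) N (x i)|
      ≤ ε := by
  have hK := nonneg_of_lipschitz (hLip 0)
  have hmesh : d * (2 * K * (2 * R / N)) ≤ ε / 2 := by
    rw [div_le_iff₀ hε] at hNR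
    rw [← mul_div_assoc, mul_div_assoc', div_le_iff₀ (by exact_mod_cast hN)]
    nlinarith
  have htail : d * (K * max (‖x‖ - R) 0) ≤ ε / 2 * ‖x‖ ^ q :=
    calc d * (K * max (‖x‖ - R) 0) = ε / 2 * (2 * K * d / ε) * max (‖x‖ - R) 0 := by
          field_simp
      _ ≤ ε / 2 * (R ^ (q - 1) * max (‖x‖ - R) 0) := by
          rw [mul_assoc]
          gcongr
      _ ≤ ε / 2 * ‖x‖ ^ q := by
          gcongr
          exact mul_max_sub_le_rpow hR (norm_nonneg x) hq
  rw [inv_mul_le_iff₀ (by positivity)]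
  calc _ ≤ d * (2 * K * (2 * R / N) + K * max (‖x‖ - R) 0) :=
        abs_sum_sub_sum_interp_le (grid_monotone hR.le) hLip (fun m => (grid_succ_sub m).le)
          grid_zero (grid_self hN.ne') x
    _ ≤ ε / 2 + ε / 2 * ‖x‖ ^ q := by rw [mul_add]; exact add_le_add hmesh htail
    _ ≤ (1 + ‖x‖ ^ q) * ε := by nlinarith [Real.rpow_nonneg (norm_nonneg x) q]

end Sum

lemma sq_mul_div_rpow_le {q t K d ε : ℝ} (hq : 0 ≤ q) (ht : 0 ≤ t) (hK : 1 ≤ K) (hd : 1 ≤ d)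
    (hε : 0 < ε) :
    31 * d ^ 2 * (2 * K * d / ε) ^ t ≤ (2 / 9) * 10 ^ 3 * 2 ^ (3 * t * (q + 1)) *
      K ^ (2 * t * (q + 1)) * d ^ (t * (q + 1) + 4) * ε ^ (-t) := by
  have hd0 : 0 < d := by linarith
  have h2 : (2 : ℝ) ^ t ≤ 2 ^ (3 * t * (q + 1)) :=
    Real.rpow_le_rpow_of_exponent_le one_le_two (by nlinarith)
  have hKt : K ^ t ≤ K ^ (2 * t * (q + 1)) := Real.rpow_le_rpow_of_exponent_le hK (by nlinarith)
  have hdt : d ^ t * d ^ 2 ≤ d ^ (t * (q + 1) + 4) := by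
    rw [← Real.rpow_natCast, ← Real.rpow_add hd0]
    exact Real.rpow_le_rpow_of_exponent_le hd (by push_cast; nlinarith)
  calc 31 * d ^ 2 * (2 * K * d / ε) ^ t = 31 * 2 ^ t * K ^ t * (d ^ t * d ^ 2) * ε ^ (-t) := by
        rw [Real.div_rpow (by positivity) hε.le, Real.mul_rpow (by positivity) hd0.le,
          Real.mul_rpow zero_le_two (by linarith), Real.rpow_neg hε.le]
        ring
    _ ≤ (2 / 9) * 10 ^ 3 * 2 ^ (3 * t * (q + 1)) * K ^ (2 * t * (q + 1)) *
        d ^ (t * (q + 1) + 4) * ε ^ (-t) := by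
        gcongr
        norm_num

theorem sum_of_lipschitz_approximation_unbounded_general (q K : ℝ) (hq : 1 < q) (hK : 1 ≤ K)
    (f : ℕ → ℝ → ℝ)
    (hLip : ∀ i : ℕ, ∀ x y : ℝ, |f i x - f i y| ≤ K * |x - y|) :
    ∀ d : ℕ, 0 < d → ∀ ε : ℝ, 0 < ε → ε ≤ 1 →
      ∃ φ : NN, φ.l 0 = d ∧ φ.l φ.depth = 1 ∧
        (∀ x : EuclideanSpace ℝ (Fin d),
          (1 + ‖x‖ ^ q)⁻¹ * |(∑ i : Fin d, f i (x i)) - φ.realScalar ReLU d x| ≤ ε) ∧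
        (∀ x y : EuclideanSpace ℝ (Fin d),
          |φ.realScalar ReLU d x - φ.realScalar ReLU d y| ≤ Real.sqrt d * K * ‖x - y‖) ∧
        ((φ.P : ℝ) ≤ (2 / 9) * 10 ^ 3 *
            2 ^ (3 * (q / (q - 1)) * (q + 1)) * K ^ (2 * (q / (q - 1)) * (q + 1)) *
            (d : ℝ) ^ ((q / (q - 1)) * (q + 1) + 4) * ε ^ (-(q / (q - 1)))) := by
  intro d hd ε hε hε1
  have hd1 : (1 : ℝ) ≤ d := Nat.one_le_cast.2 hd
  set A := 2 * K * d / ε with hA_def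
  have hA : 1 ≤ A := by rw [le_div_iff₀ hε]; nlinarith
  set R := A ^ (q - 1)⁻¹
  have hR : 1 ≤ R := Real.one_le_rpow hA (inv_nonneg.2 (by linarith))
  have hAR : A * R = A ^ (q / (q - 1)) := by
    have hq1 : q - 1 ≠ 0 := sub_ne_zero.2 hq.ne'
    rw [show q / (q - 1) = 1 + (q - 1)⁻¹ by field_simp; ring, Real.rpow_add (by linarith),
      Real.rpow_one]
  set N := ⌈4 * (A * R)⌉₊
  refine ⟨NN.interpNet d N f (grid R N), rfl, rfl, fun x => ?_, fun x y => ?_, ?_⟩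
  · rw [NN.interpNet_realScalar]
    refine weighted_abs_sum_sub_sum_interp_grid_le hLip hq.le hε (by linarith)
      (Nat.ceil_pos.2 (by positivity)) ?_ ?_ x
    · rw [Real.rpow_inv_rpow (by linarith) (by linarith)]
    · calc 8 * K * d * R / ε = 4 * (A * R) := by rw [hA_def]; ring
        _ ≤ N := Nat.le_ceil _
  · simp only [NN.interpNet_realScalar]
    exact abs_sum_interp_sub_sum_interp_le (grid_monotone (by linarith)) hLip x y
  · calc _ ≤ 31 * d ^ 2 * (A * R) :=
          NN.interpNet_P_le hd (one_le_mul_of_one_le_of_one_le hA hR)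
            (Nat.ceil_lt_add_one (by positivity)).le
      _ ≤ _ := hAR ▸ sq_mul_div_rpow_le (by linarith)
          (div_nonneg (by linarith) (by linarith)) hK hd1 hε

/-- Proposition 7.4: sums of one-dimensional Lipschitz functions can be
approximated by ReLU networks on all of `ℝ^d` with respect to the weight
function `(1 + ‖x‖^q)⁻¹`, without the curse of dimensionality. -/
theorem sum_of_lipschitz_approximation_unbounded (q K : ℝ) (hq : 1 < q) (hK : 1 ≤ K)
    (f : ℕ → ℝ → ℝ)
    (hLip : ∀ i : ℕ, ∀ x y : ℝ, |f i x - f i y| ≤ K * |x - y|)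
    (h0 : ∀ i : ℕ, |f i 0| ≤ K) :
    ∀ d : ℕ, 0 < d → ∀ ε : ℝ, 0 < ε → ε ≤ 1 →
      ∃ φ : NN, φ.l 0 = d ∧ φ.l φ.depth = 1 ∧
        (∀ x : EuclideanSpace ℝ (Fin d),
          (1 + ‖x‖ ^ q)⁻¹ * |(∑ i : Fin d, f i (x i)) - φ.realScalar ReLU d x| ≤ ε) ∧
        (∀ x y : EuclideanSpace ℝ (Fin d),
          |φ.realScalar ReLU d x - φ.realScalar ReLU d y| ≤ Real.sqrt d * K * ‖x - y‖) ∧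
        ((φ.P : ℝ) ≤ (2 / 9) * 10 ^ 3 *
            2 ^ (3 * (q / (q - 1)) * (q + 1)) * K ^ (2 * (q / (q - 1)) * (q + 1)) *
            (d : ℝ) ^ ((q / (q - 1)) * (q + 1) + 4) * ε ^ (-(q / (q - 1)))) :=
  sum_of_lipschitz_approximation_unbounded_general q K hq hK f hLip
end
end
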